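/- Energy stability of the semi-implicit first-order scheme (Proposition 2.1): Assume γ ∈ L¹(G) is even and positive semidefinite. Fix τ > 0, ξ ≥ 0, c ∈ ℝ, a nonempty set K ⊆ L²(G), a function Ψ : K → ℝ, and v ∈ K. If u* ∈ K minimizes J over K (i.e. J(u*) ≤ J(u) for all u ∈ K), then E(u*) ≤ J(u*) ≤ J(v) = E(v); in particular the nonlocal Ginzburg–Landau energy does not increase in one time step: E(u*) ≤ E(v). -/

import Mathlib

open MeasureTheory ENNReal

noncomputable section

/-- The `n`-dimensional torus: product of circles `ℝ/(Lᵢℤ)`. -/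
abbrev Torus (n : ℕ) (L : Fin n → ℝ) := Π i : Fin n, AddCircle (L i)

variable {n : ℕ} {L : Fin n → ℝ} [∀ i, Fact (0 < L i)]

/-- The `L²` inner product `(u,v) = ∫ u v`. -/
def ip (u v : Torus n L → ℝ) : ℝ := ∫ x, u x * v x

/-- The convolution `(γ*u)(x) = ∫ γ(x-y) u(y) dy`. -/
def conv (γ u : Torus n L → ℝ) : Torus n L → ℝ := fun x => ∫ y, γ (x - y) * u y

/-- The nonlocal Ginzburg–Landau energy
`E(u) = (ξ/2)‖u‖² − (1/2)(γ*u, u) + c + Ψ(u)`. -/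
def energyE (γ : Torus n L → ℝ) (ξ c : ℝ) (Ψ : (Torus n L → ℝ) → ℝ)
    (u : Torus n L → ℝ) : ℝ :=
  ξ / 2 * ip u u - 1 / 2 * ip (conv γ u) u + c + Ψ u

/-- The one-step objective of the semi-implicit first-order scheme with previous iterate `v`:
`J(u) = (ξ/2)‖u‖² − (1/2)(γ*v, v) − (γ*v, u−v) + (1/(2τ))‖u−v‖² + c + Ψ(u)`. -/
def objJ (γ : Torus n L → ℝ) (τ ξ c : ℝ) (Ψ : (Torus n L → ℝ) → ℝ)
    (v u : Torus n L → ℝ) : ℝ :=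
  ξ / 2 * ip u u - 1 / 2 * ip (conv γ v) v - ip (conv γ v) (u - v)
    + 1 / (2 * τ) * ip (u - v) (u - v) + c + Ψ u

private lemma keyInt {n : ℕ} {L : Fin n → ℝ} [∀ i, Fact (0 < L i)]
    {γ a b : Torus n L → ℝ} (hγ : Integrable γ) (ha : MemLp a 2) (hb : MemLp b 2) :
    Integrable (fun p : Torus n L × Torus n L => γ (p.1 - p.2) * a p.2 * b p.1)
      (volume.prod volume) := by
  set μ : Measure (Torus n L) := volume with hμ
  have hT : MeasurePreserving (fun p : Torus n L × Torus n L => (p.1 - p.2, p.2))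
      (μ.prod μ) (μ.prod μ) := measurePreserving_sub_prod μ μ
  have hsub : Measure.QuasiMeasurePreserving (fun p : Torus n L × Torus n L => p.1 - p.2)
      (μ.prod μ) μ :=
    Measure.quasiMeasurePreserving_fst.comp hT.quasiMeasurePreserving
  have hm : AEStronglyMeasurable (fun p : Torus n L × Torus n L => γ (p.1 - p.2) * a p.2 * b p.1)
      (μ.prod μ) := by
    have := ((hγ.1.comp_quasiMeasurePreserving hsub).mul
      (ha.1.comp_quasiMeasurePreserving Measure.quasiMeasurePreserving_snd)).mul
      (hb.1.comp_quasiMeasurePreserving Measure.quasiMeasurePreserving_fst)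
    exact this
  refine ⟨hm, ?_⟩
  obtain ⟨γ', hγ'sm, hγ'⟩ := hγ.1
  obtain ⟨a', ha'sm, ha'⟩ := ha.1
  obtain ⟨b', hb'sm, hb'⟩ := hb.1
  have hγ'm : Measurable γ' := hγ'sm.measurable
  have ha'm : Measurable a' := ha'sm.measurable
  have hb'm : Measurable b' := hb'sm.measurable
  have hae : (fun p : Torus n L × Torus n L => γ' (p.1 - p.2) * a' p.2 * b' p.1)
      =ᵐ[μ.prod μ] (fun p => γ (p.1 - p.2) * a p.2 * b p.1) := by
    have h1 := hγ'.comp_tendsto hsub.tendsto_ae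
    have h2 := ha'.comp_tendsto (Measure.quasiMeasurePreserving_snd (μ := μ) (ν := μ)).tendsto_ae
    have h3 := hb'.comp_tendsto (Measure.quasiMeasurePreserving_fst (μ := μ) (ν := μ)).tendsto_ae
    filter_upwards [h1, h2, h3] with p e1 e2 e3
    simp only [Function.comp_apply] at e1 e2 e3
    rw [e1, e2, e3]
  refine HasFiniteIntegral.congr ?_ hae
  have hFm : Measurable fun q : Torus n L × Torus n L =>
      ((‖γ' q.1‖₊ : ℝ≥0∞) * (‖a' q.2‖₊ : ℝ≥0∞) * (‖b' (q.1 + q.2)‖₊ : ℝ≥0∞)) := by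
    fun_prop
  have Sa : (∫⁻ y, (‖a' y‖₊ : ℝ≥0∞) ^ (2:ℝ) ∂μ) ^ ((1:ℝ)/2) = eLpNorm a' 2 μ := by
    rw [eLpNorm_eq_lintegral_rpow_enorm_toReal (by norm_num) (by norm_num)]
    norm_num
    simp only [enorm_eq_nnnorm]
  have Sb : ∀ z : Torus n L, (∫⁻ y, (‖b' (z + y)‖₊ : ℝ≥0∞) ^ (2:ℝ) ∂μ) ^ ((1:ℝ)/2)
      = eLpNorm b' 2 μ := by
    intro z
    rw [lintegral_add_left_eq_self (fun y => (‖b' y‖₊ : ℝ≥0∞) ^ (2:ℝ)) z,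
      eLpNorm_eq_lintegral_rpow_enorm_toReal (by norm_num) (by norm_num)]
    norm_num
    simp only [enorm_eq_nnnorm]
  have hconj : (2:ℝ).HolderConjugate 2 := Real.HolderConjugate.two_two
  have hEa : eLpNorm a' 2 μ < ⊤ := by rw [← eLpNorm_congr_ae ha']; exact ha.2
  have hEb : eLpNorm b' 2 μ < ⊤ := by rw [← eLpNorm_congr_ae hb']; exact hb.2
  have hγ'int : Integrable γ' μ := hγ.congr hγ'
  show (∫⁻ p, (‖γ' (p.1 - p.2) * a' p.2 * b' p.1‖₊ : ℝ≥0∞) ∂(μ.prod μ)) < ⊤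
  calc ∫⁻ p, (‖γ' (p.1 - p.2) * a' p.2 * b' p.1‖₊ : ℝ≥0∞) ∂(μ.prod μ)
      = ∫⁻ p, (fun q : Torus n L × Torus n L =>
          (‖γ' q.1‖₊ : ℝ≥0∞) * ‖a' q.2‖₊ * ‖b' (q.1 + q.2)‖₊) ((p.1 - p.2, p.2)) ∂(μ.prod μ) := by
        refine lintegral_congr fun p => ?_
        simp [nnnorm_mul, sub_add_cancel, ENNReal.coe_mul]
    _ = ∫⁻ q, ((‖γ' q.1‖₊ : ℝ≥0∞) * ‖a' q.2‖₊ * ‖b' (q.1 + q.2)‖₊) ∂(μ.prod μ) :=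
        hT.lintegral_comp hFm
    _ = ∫⁻ z, ∫⁻ y, ((‖γ' z‖₊ : ℝ≥0∞) * ‖a' y‖₊ * ‖b' (z + y)‖₊) ∂μ ∂μ :=
        lintegral_prod _ hFm.aemeasurable
    _ = ∫⁻ z, (‖γ' z‖₊ : ℝ≥0∞) * ∫⁻ y, ((‖a' y‖₊ : ℝ≥0∞) * ‖b' (z + y)‖₊) ∂μ ∂μ := by
        refine lintegral_congr fun z => ?_
        rw [← lintegral_const_mul' _ _ ENNReal.coe_ne_top]
        simp [mul_assoc]
    _ ≤ ∫⁻ z, (‖γ' z‖₊ : ℝ≥0∞) * (eLpNorm a' 2 μ * eLpNorm b' 2 μ) ∂μ := by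
        refine lintegral_mono fun z => ?_
        gcongr
        have := ENNReal.lintegral_mul_le_Lp_mul_Lq μ hconj
          (f := fun y => (‖a' y‖₊ : ℝ≥0∞)) (g := fun y => (‖b' (z + y)‖₊ : ℝ≥0∞))
          ha'm.nnnorm.coe_nnreal_ennreal.aemeasurable
          ((hb'm.comp (measurable_const_add z)).nnnorm.coe_nnreal_ennreal.aemeasurable)
        calc ∫⁻ y, (‖a' y‖₊ : ℝ≥0∞) * ‖b' (z + y)‖₊ ∂μ
            ≤ (∫⁻ y, (‖a' y‖₊ : ℝ≥0∞) ^ (2:ℝ) ∂μ) ^ ((1:ℝ)/2)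
              * (∫⁻ y, (‖b' (z + y)‖₊ : ℝ≥0∞) ^ (2:ℝ) ∂μ) ^ ((1:ℝ)/2) := by
              simpa using this
          _ = eLpNorm a' 2 μ * eLpNorm b' 2 μ := by rw [Sa, Sb z]
    _ = (∫⁻ z, (‖γ' z‖₊ : ℝ≥0∞) ∂μ) * (eLpNorm a' 2 μ * eLpNorm b' 2 μ) :=
        lintegral_mul_const' _ _ (by finiteness)
    _ < ⊤ := ENNReal.mul_lt_top hγ'int.2 (ENNReal.mul_lt_top hEa hEb)

private lemma reprA {n : ℕ} {L : Fin n → ℝ} [∀ i, Fact (0 < L i)]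
    {γ a b : Torus n L → ℝ} (hγ : Integrable γ) (ha : MemLp a 2) (hb : MemLp b 2) :
    ip (conv γ a) b = ∫ p, γ (p.1 - p.2) * a p.2 * b p.1 ∂(volume.prod volume) := by
  have h1 : ip (conv γ a) b = ∫ x, ∫ y, γ (x - y) * a y * b x := by
    unfold ip conv
    congr 1
    funext x
    rw [← integral_mul_const]
  rw [h1, integral_integral (keyInt hγ ha hb)]

private lemma symmA {n : ℕ} {L : Fin n → ℝ} [∀ i, Fact (0 < L i)]
    {γ a b : Torus n L → ℝ} (hγeven : ∀ᵐ x, γ (-x) = γ x)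
    (hγ : Integrable γ) (ha : MemLp a 2) (hb : MemLp b 2) :
    ip (conv γ a) b = ip (conv γ b) a := by
  rw [reprA hγ ha hb, reprA hγ hb ha,
    ← integral_prod_swap (fun p : Torus n L × Torus n L => γ (p.1 - p.2) * b p.2 * a p.1)]
  refine integral_congr_ae ?_
  have hT : MeasurePreserving (fun p : Torus n L × Torus n L => (p.1 - p.2, p.2))
      ((volume : Measure (Torus n L)).prod volume) (volume.prod volume) :=
    measurePreserving_sub_prod _ _
  have hsub : Measure.QuasiMeasurePreserving (fun p : Torus n L × Torus n L => p.1 - p.2)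
      (volume.prod volume) volume :=
    Measure.quasiMeasurePreserving_fst.comp hT.quasiMeasurePreserving
  filter_upwards [hsub.tendsto_ae.eventually hγeven] with p hp
  simp only [Prod.fst_swap, Prod.snd_swap, Prod.swap]
  rw [show p.2 - p.1 = -(p.1 - p.2) by abel, hp]
  ring

private lemma expandA {n : ℕ} {L : Fin n → ℝ} [∀ i, Fact (0 < L i)]
    {γ v w : Torus n L → ℝ} (hγeven : ∀ᵐ x, γ (-x) = γ x)
    (hγ : Integrable γ) (hv : MemLp v 2) (hw : MemLp w 2) :
    ip (conv γ (v + w)) (v + w)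
      = ip (conv γ v) v + 2 * ip (conv γ v) w + ip (conv γ w) w := by
  have hvw : MemLp (v + w) 2 := hv.add hw
  have e : (fun p : Torus n L × Torus n L => γ (p.1 - p.2) * (v + w) p.2 * (v + w) p.1)
      = fun p => (γ (p.1 - p.2) * v p.2 * v p.1 + γ (p.1 - p.2) * v p.2 * w p.1)
          + (γ (p.1 - p.2) * w p.2 * v p.1 + γ (p.1 - p.2) * w p.2 * w p.1) := by
    funext p
    simp only [Pi.add_apply]
    ring
  have i12 : Integrable (fun p : Torus n L × Torus n L =>
      γ (p.1 - p.2) * v p.2 * v p.1 + γ (p.1 - p.2) * v p.2 * w p.1) (volume.prod volume) :=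
    (keyInt hγ hv hv).add (keyInt hγ hv hw)
  have i34 : Integrable (fun p : Torus n L × Torus n L =>
      γ (p.1 - p.2) * w p.2 * v p.1 + γ (p.1 - p.2) * w p.2 * w p.1) (volume.prod volume) :=
    (keyInt hγ hw hv).add (keyInt hγ hw hw)
  rw [reprA hγ hvw hvw, e,
    integral_add i12 i34,
    integral_add (keyInt hγ hv hv) (keyInt hγ hv hw),
    integral_add (keyInt hγ hw hv) (keyInt hγ hw hw),
    ← reprA hγ hv hv, ← reprA hγ hv hw, ← reprA hγ hw hv, ← reprA hγ hw hw,
    symmA hγeven hγ hw hv]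
  ring

/-- **Energy stability of the semi-implicit first-order scheme** (Proposition 2.1):
if `γ ∈ L¹` is even and positive semidefinite and `u*` minimizes `J` over `K ∋ v`, then
`E(u*) ≤ J(u*) ≤ J(v) = E(v)`; in particular `E(u*) ≤ E(v)`. -/
theorem energy_stability_first_order
    {n : ℕ} (hn : 1 ≤ n) {L : Fin n → ℝ} [∀ i, Fact (0 < L i)]
    (γ : Torus n L → ℝ) (hγL1 : Integrable γ)
    (hγeven : ∀ᵐ x, γ (-x) = γ x)
    (hγpsd : ∀ w : Torus n L → ℝ, MemLp w 2 → 0 ≤ ip (conv γ w) w)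
    (τ : ℝ) (hτ : 0 < τ) (ξ : ℝ) (hξ : 0 ≤ ξ) (c : ℝ)
    (K : Set (Torus n L → ℝ)) (hKne : K.Nonempty)
    (hKL2 : ∀ u ∈ K, MemLp u 2)
    (Ψ : (Torus n L → ℝ) → ℝ)
    (v : Torus n L → ℝ) (hv : v ∈ K)
    (ustar : Torus n L → ℝ) (hustar : ustar ∈ K)
    (hmin : ∀ u ∈ K, objJ γ τ ξ c Ψ v ustar ≤ objJ γ τ ξ c Ψ v u) :
    energyE γ ξ c Ψ ustar ≤ objJ γ τ ξ c Ψ v ustar ∧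
      objJ γ τ ξ c Ψ v ustar ≤ objJ γ τ ξ c Ψ v v ∧
      objJ γ τ ξ c Ψ v v = energyE γ ξ c Ψ v ∧
      energyE γ ξ c Ψ ustar ≤ energyE γ ξ c Ψ v := by
  have hv2 : MemLp v 2 := hKL2 v hv
  have hu2 : MemLp ustar 2 := hKL2 ustar hustar
  have hw2 : MemLp (ustar - v) 2 := hu2.sub hv2
  set w : Torus n L → ℝ := ustar - v with hwdef
  have husum : v + w = ustar := by
    funext x
    simp [hwdef]
  have hexp : ip (conv γ ustar) ustar
      = ip (conv γ v) v + 2 * ip (conv γ v) w + ip (conv γ w) w := by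
    rw [← husum]
    exact expandA hγeven hγL1 hv2 hw2
  have hCpos : 0 ≤ ip (conv γ w) w := hγpsd w hw2
  have hwpos : 0 ≤ ip w w := integral_nonneg fun x => mul_self_nonneg _
  have hJv : objJ γ τ ξ c Ψ v v = energyE γ ξ c Ψ v := by
    simp [objJ, energyE, sub_self, ip]
  have h1 : energyE γ ξ c Ψ ustar ≤ objJ γ τ ξ c Ψ v ustar := by
    unfold objJ energyE
    rw [hexp]
    have ht : 0 ≤ 1 / (2 * τ) := by positivity
    nlinarith [mul_nonneg ht hwpos]
  exact ⟨h1, hmin v hv, hJv, h1.trans ((hmin v hv).trans_eq hJv)⟩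


end
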